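/- arXiv:0808.0436 — 4 statements merged into one kernel-verified Lean document; each statement's English description precedes it below -/
import Mathlib

section
/- Let (A, m) be an Artinian local ring with residue field k = A/m, and let S be a flat A-algebra such that S̄ = S ⊗_A k is a Noetherian ring of finite Krull dimension which is pure, i.e., every nonzero ideal J̄ of S̄ satisfies dim(S̄/Ann_{S̄}(J̄)) = dim S̄. Then S is pure: every nonzero ideal J of S satisfies dim(S/Ann_S(J)) = dim S. -/
open TensorProduct IsLocalRing

section Helpers

lemma exists_indep_gen {A : Type} [CommRing A] [IsLocalRing A] :
    ∀ (r : ℕ) (N : Ideal A) (a : Fin r → A), Ideal.span (Set.range a) = N →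
    ∃ (r' : ℕ) (a' : Fin r' → A), Ideal.span (Set.range a') = N ∧
      ∀ b : Fin r' → A, (∑ p, b p * a' p = 0) → ∀ p, b p ∈ maximalIdeal A := by
  intro r
  induction r with
  | zero => intro N a hspan; exact ⟨0, a, hspan, fun b _ p => p.elim0⟩
  | succ r ih =>
    intro N a hspan
    by_cases hind : ∀ b : Fin (r+1) → A, (∑ p, b p * a p = 0) → ∀ p, b p ∈ maximalIdeal A
    · exact ⟨r+1, a, hspan, hind⟩
    · push_neg at hind
      obtain ⟨b, hb, q, hq⟩ := hind
      have hu : IsUnit (b q) := by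
        by_contra h
        exact hq (h : b q ∈ nonunits A)
      set a' : Fin r → A := a ∘ q.succAbove with ha'
      apply ih N a'
      rw [← hspan]
      apply le_antisymm
      · apply Ideal.span_le.2
        rintro _ ⟨p, rfl⟩
        exact Ideal.subset_span ⟨q.succAbove p, rfl⟩
      · apply Ideal.span_le.2
        rintro _ ⟨p, rfl⟩
        rcases eq_or_ne p q with rfl | hpq
        · obtain ⟨v, hv⟩ : ∃ v, v * b p = 1 := hu.exists_left_inv
          have hb' : b p * a p + ∑ j ∈ Finset.univ.erase p, b j * a j = 0 :=
            (Finset.add_sum_erase Finset.univ (fun j => b j * a j)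
              (Finset.mem_univ p)).trans hb
          have hrel : b p * a p = - ∑ j ∈ Finset.univ.erase p, b j * a j :=
            eq_neg_of_add_eq_zero_left hb'
          have key : a p = v * (b p * a p) := by rw [← mul_assoc, hv, one_mul]
          rw [key, hrel]
          apply Ideal.mul_mem_left
          apply neg_mem
          apply Ideal.sum_mem
          intro j hj
          have hjp : j ≠ p := (Finset.mem_erase.1 hj).1
          obtain ⟨j', hj'⟩ := Fin.exists_succAbove_eq hjp
          apply Ideal.mul_mem_left
          exact Ideal.subset_span ⟨j', by simp [ha', hj']⟩
        · obtain ⟨p', hp'⟩ := Fin.exists_succAbove_eq hpq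
          exact Ideal.subset_span ⟨p', by simp [ha', hp']⟩

lemma socle_finite_test {A : Type} [CommRing A] [IsArtinianRing A] (m : Ideal A) :
    ∃ F : Finset A, (∀ t ∈ F, t ∈ m) ∧
      ∀ c : A, (∀ t ∈ F, t * c = 0) → ∀ x ∈ m, x * c = 0 := by
  classical
  set K : A → Ideal A := fun t => (Ideal.span ({t} : Set A)).annihilator with hK
  have hKmem : ∀ t c : A, c ∈ K t ↔ t * c = 0 := by
    intro t c
    show c ∈ (Submodule.span A ({t} : Set A)).annihilator ↔ _
    rw [Submodule.mem_annihilator_span_singleton, smul_eq_mul, mul_comm]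
  obtain ⟨N₀, ⟨F₀, hF₀m, hF₀⟩, hmin⟩ :=
    IsArtinian.set_has_minimal
      {N : Ideal A | ∃ F : Finset A, (∀ t ∈ F, t ∈ m) ∧ N = F.inf K}
      ⟨⊤, ∅, by simp, by simp⟩
  refine ⟨F₀, hF₀m, ?_⟩
  intro c hc x hx
  have hcN₀ : c ∈ N₀ := by
    rw [hF₀, Submodule.mem_finsetInf]
    intro t ht
    rw [hKmem]
    exact hc t ht
  have hle : N₀ ≤ K x := by
    have hmem : K x ⊓ N₀ ∈ {N : Ideal A | ∃ F : Finset A, (∀ t ∈ F, t ∈ m) ∧ N = F.inf K} := by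
      refine ⟨insert x F₀, ?_, ?_⟩
      · intro t ht
        rcases Finset.mem_insert.1 ht with rfl | ht
        · exact hx
        · exact hF₀m t ht
      · rw [Finset.inf_insert, hF₀]
    have := hmin _ hmem
    have heq : K x ⊓ N₀ = N₀ := by
      rcases lt_or_eq_of_le (inf_le_right : K x ⊓ N₀ ≤ N₀) with h | h
      · exact absurd h this
      · exact h
    intro y hy
    rw [← heq] at hy
    exact hy.1
  exact (hKmem x c).1 (hle hcN₀)

noncomputable abbrev psi (A S : Type) [CommRing A] [IsLocalRing A] [CommRing S]
    [Algebra A S] : S →+* (ResidueField A) ⊗[A] S :=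
  (Algebra.TensorProduct.includeRight (R := A) (A := ResidueField A) (B := S)).toRingHom

variable (A S : Type) [CommRing A] [IsLocalRing A] [CommRing S] [Algebra A S]

lemma psi_surjective : Function.Surjective (psi A S) := by
  intro t
  induction t using TensorProduct.induction_on with
  | zero => exact ⟨0, map_zero _⟩
  | tmul x s =>
    obtain ⟨a, rfl⟩ := Ideal.Quotient.mk_surjective (I := maximalIdeal A) x
    refine ⟨a • s, ?_⟩
    show (1 : ResidueField A) ⊗ₜ[A] (a • s) = _
    rw [tmul_smul, TensorProduct.smul_tmul']
    congr 1
    rw [Algebra.smul_def, mul_one]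
    rfl
  | add x y hx hy =>
    obtain ⟨sx, hsx⟩ := hx
    obtain ⟨sy, hsy⟩ := hy
    exact ⟨sx + sy, by rw [map_add, hsx, hsy]⟩

lemma ker_psi : RingHom.ker (psi A S) = (maximalIdeal A).map (algebraMap A S) := by
  apply le_antisymm
  · set I : Ideal S := (maximalIdeal A).map (algebraMap A S) with hI
    have halg : ∀ (a : A) (z : S ⧸ I), a • z = Ideal.Quotient.mk I (algebraMap A S a) * z := by
      intro a z
      rw [Algebra.smul_def]
      rfl
    set q : S →ₗ[A] S ⧸ I := (Algebra.linearMap S (S ⧸ I)).restrictScalars A with hq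
    have hf : maximalIdeal A ≤ LinearMap.ker (LinearMap.toSpanSingleton A (S →ₗ[A] S ⧸ I) q) := by
      intro a ha
      rw [LinearMap.mem_ker]
      ext s
      show a • (Ideal.Quotient.mk I s) = 0
      rw [halg]
      have : algebraMap A S a ∈ I := Ideal.mem_map_of_mem _ ha
      rw [Ideal.Quotient.eq_zero_iff_mem.2 this, zero_mul]
    set Φ' : ResidueField A →ₗ[A] (S →ₗ[A] S ⧸ I) :=
      Submodule.liftQ (maximalIdeal A)
        (LinearMap.toSpanSingleton A (S →ₗ[A] S ⧸ I) q) hf with hΦ'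
    set Φ : (ResidueField A) ⊗[A] S →ₗ[A] S ⧸ I := TensorProduct.lift Φ' with hΦ
    intro s hs
    have h0 : Φ (psi A S s) = 0 := by
      rw [RingHom.mem_ker] at hs
      rw [hs, map_zero]
    have h1 : Φ (psi A S s) = Ideal.Quotient.mk I s := by
      show Φ ((1 : ResidueField A) ⊗ₜ[A] s) = _
      rw [hΦ, TensorProduct.lift.tmul]
      show (1 : A) • q s = _
      rw [one_smul]
      rfl
    rw [h1] at h0
    exact Ideal.Quotient.eq_zero_iff_mem.1 h0
  · rw [Ideal.map_le_iff_le_comap]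
    intro a ha
    rw [Ideal.mem_comap, RingHom.mem_ker]
    show (1 : ResidueField A) ⊗ₜ[A] (algebraMap A S a) = 0
    have h1 : algebraMap A S a = a • (1 : S) := by rw [Algebra.smul_def, mul_one]
    rw [h1, tmul_smul, TensorProduct.smul_tmul']
    have h2 : a • (1 : ResidueField A) = 0 := by
      rw [Algebra.smul_def, mul_one]
      exact Ideal.Quotient.eq_zero_iff_mem.2 ha
    rw [h2, zero_tmul]

lemma ringKrullDim_quotient_eq_of_le_nilradical {R : Type} [CommRing R] (I : Ideal R)
    (hI : I ≤ nilradical R) : ringKrullDim (R ⧸ I) = ringKrullDim R := by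
  apply le_antisymm (ringKrullDim_quotient_le I)
  have hle : ∀ p : PrimeSpectrum R, I ≤ p.asIdeal := fun p =>
    le_trans hI (nilradical_le_prime p.asIdeal)
  have hker : RingHom.ker (Ideal.Quotient.mk I) = I := Ideal.mk_ker
  let f : PrimeSpectrum R → PrimeSpectrum (R ⧸ I) := fun p =>
    ⟨p.asIdeal.map (Ideal.Quotient.mk I),
      Ideal.map_isPrime_of_surjective Ideal.Quotient.mk_surjective
        (by rw [hker]; exact hle p)⟩
  have hcomap : ∀ p : PrimeSpectrum R,
      (p.asIdeal.map (Ideal.Quotient.mk I)).comap (Ideal.Quotient.mk I) = p.asIdeal := by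
    intro p
    rw [Ideal.comap_map_of_surjective _ Ideal.Quotient.mk_surjective,
      ← RingHom.ker_eq_comap_bot, hker, sup_eq_left]
    exact hle p
  have hsm : StrictMono f := by
    intro p q hpq
    constructor
    · exact Ideal.map_mono hpq.le
    · intro hqp
      have : q.asIdeal ≤ p.asIdeal := by
        rw [← hcomap p, ← hcomap q]
        exact Ideal.comap_mono hqp
      exact absurd (le_antisymm hpq.le this) (ne_of_lt hpq)
  exact Order.krullDim_le_of_strictMono f hsm

lemma exists_socle_rep {A S : Type} [CommRing A] [CommRing S] [Algebra A S]
    [Module.Flat A S] (F : Finset A) (y : S) (hy : ∀ t ∈ F, t • y = 0) :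
    ∃ (κ : Type) (T : Finset κ) (u : κ → A) (s : κ → S),
      (∀ j ∈ T, ∀ t ∈ F, t * u j = 0) ∧ y = ∑ j ∈ T, u j • s j := by
  classical
  set v : ↥F → A := fun t => (t : A) with hv
  set f : (↥F → A) →ₗ[A] A := Fintype.linearCombination A v with hf
  set x : A →ₗ[A] S := LinearMap.toSpanSingleton A S y with hx
  have h : x ∘ₗ f = 0 := by
    apply LinearMap.ext
    intro c
    have hty : ∀ t : ↥F, (t : A) • y = 0 := fun t => hy t t.2
    simp only [LinearMap.comp_apply, LinearMap.zero_apply, hf,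
      Fintype.linearCombination_apply, hx, map_sum, map_smul,
      LinearMap.toSpanSingleton_apply]
    simp [hv, hty]
  obtain ⟨κ, aℓ, yℓ, hxy, haf⟩ :=
    Module.Flat.exists_factorization_of_comp_eq_zero_of_free h
  set u : Fin κ →₀ A := aℓ 1 with hu
  have hut : ∀ t ∈ F, t • u = 0 := by
    intro t ht
    have h1 : f (Pi.single (⟨t, ht⟩ : ↥F) 1) = t := by
      rw [hf]
      rw [Fintype.linearCombination_apply]
      rw [Finset.sum_eq_single (⟨t, ht⟩ : ↥F)]
      · simp [hv]
      · intro b _ hb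
        simp [Pi.single_eq_of_ne hb]
      · intro hmem
        exact absurd (Finset.mem_univ _) hmem
    have h2 : aℓ t = 0 := by
      rw [← h1]
      have := LinearMap.congr_fun haf (Pi.single (⟨t, ht⟩ : ↥F) 1)
      simpa using this
    rw [hu]
    calc t • aℓ 1 = aℓ (t • 1) := (map_smul aℓ t 1).symm
    _ = aℓ t := by rw [smul_eq_mul, mul_one]
    _ = 0 := h2
  refine ⟨Fin κ, u.support, fun j => u j, fun j => yℓ (Finsupp.single j 1), ?_, ?_⟩
  · intro j _ t ht
    have := hut t ht
    have hj := DFunLike.congr_fun this j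
    simpa using hj
  · have hy1 : y = yℓ u := by
      have := LinearMap.congr_fun hxy 1
      simpa [hx] using this
    rw [hy1]
    conv_lhs => rw [← Finsupp.sum_single u]
    rw [Finsupp.sum, map_sum]
    apply Finset.sum_congr rfl
    intro j _
    rw [← Finsupp.smul_single_one, map_smul]

end Helpers

/-- A Noetherian-style purity condition: every nonzero ideal `J` of `S` satisfies
`dim (S / Ann_S J) = dim S`. -/
def IsPureRing (S : Type) [CommRing S] : Prop :=
  ∀ J : Ideal S, J ≠ ⊥ →
    ringKrullDim (S ⧸ Submodule.annihilator J) = ringKrullDim S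

/-- Let `(A, m)` be an Artinian local ring with residue field `k = A/m`,
and let `S` be a flat `A`-algebra such that `S̄ = S ⊗_A k` is a Noetherian ring of finite
Krull dimension which is pure.  Then `S` is pure. -/
theorem stmt_8
    (A : Type) [CommRing A] [IsArtinianRing A] [IsLocalRing A]
    (S : Type) [CommRing S] [Algebra A S] (hflat : Module.Flat A S)
    (hnoeth : IsNoetherianRing ((IsLocalRing.ResidueField A) ⊗[A] S))
    (hfd : ∃ d : ℕ, ringKrullDim ((IsLocalRing.ResidueField A) ⊗[A] S)
        = (d : WithBot (WithTop ℕ)))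
    (hpure : IsPureRing ((IsLocalRing.ResidueField A) ⊗[A] S)) :
    IsPureRing S := by
  classical
  haveI := hflat
  intro J hJ
  set m : Ideal A := maximalIdeal A with hm
  set I : Ideal S := m.map (algebraMap A S) with hI
  have hψs := psi_surjective A S
  have hkerψ : RingHom.ker (psi A S) = I := ker_psi A S
  -- nilpotency of m
  obtain ⟨n, hmn⟩ : IsNilpotent m := by
    rw [hm, ← IsLocalRing.jacobson_eq_maximalIdeal (⊥ : Ideal A) bot_ne_top]
    exact IsArtinianRing.isNilpotent_jacobson_bot
  -- dim (k ⊗ S) = dim S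
  have hInil : I ≤ nilradical S := by
    rw [hI, Ideal.map_le_iff_le_comap]
    intro a ha
    have hpow : a ^ n = 0 := by
      have h1 : a ^ n ∈ m ^ n := Ideal.pow_mem_pow ha n
      rw [hmn] at h1
      simpa using h1
    rw [Ideal.mem_comap]
    exact mem_nilradical.2 ⟨n, by rw [← map_pow, hpow, map_zero]⟩
  have hdimquot : ringKrullDim (S ⧸ I) = ringKrullDim S :=
    ringKrullDim_quotient_eq_of_le_nilradical I hInil
  have hdimT : ringKrullDim ((IsLocalRing.ResidueField A) ⊗[A] S) = ringKrullDim S := by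
    have e := RingHom.quotientKerEquivOfSurjective hψs
    have h1 := (ringKrullDim_eq_of_ringEquiv e).symm
    rw [hkerψ] at h1
    exact h1.trans hdimquot
  -- pick x ∈ J nonzero
  obtain ⟨x, hxJ, hx0⟩ := (Submodule.ne_bot_iff J).1 hJ
  -- filtration m^i • span{x}
  set W : Submodule A S := Submodule.span A {x} with hW
  set Nf : ℕ → Submodule A S := fun i => (m ^ i) • W with hNf
  have hNn : Nf n = ⊥ := by
    show (m ^ n) • W = ⊥
    rw [hmn]
    show ((⊥ : Ideal A)) • W = ⊥
    exact Submodule.bot_smul W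
  have hN0 : Nf 0 ≠ ⊥ := by
    show (m ^ 0) • W ≠ ⊥
    rw [pow_zero, Ideal.one_eq_top, Submodule.top_smul]
    rw [hW]
    simpa [Submodule.span_singleton_eq_bot] using hx0
  have hex : ∃ i, Nf i = ⊥ := ⟨n, hNn⟩
  set i₀ : ℕ := Nat.find hex with hi₀
  have hi₀pos : i₀ ≠ 0 := by
    intro h
    exact hN0 (h ▸ Nat.find_spec hex)
  set i : ℕ := i₀ - 1 with hidef
  have hisucc : i + 1 = i₀ := Nat.succ_pred_eq_of_pos (Nat.pos_of_ne_zero hi₀pos)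
  have hNi : Nf i ≠ ⊥ := Nat.find_min hex (by omega)
  have hNi1 : Nf (i+1) = ⊥ := by rw [hisucc]; exact Nat.find_spec hex
  obtain ⟨y, hyN, hy0⟩ := (Submodule.ne_bot_iff _).1 hNi
  have hmy : ∀ t ∈ m, t • y = 0 := by
    intro t ht
    have h1 : t • y ∈ m • Nf i := Submodule.smul_mem_smul ht hyN
    have h2 : m • Nf i = Nf (i+1) := by
      show m • ((m ^ i) • W) = (m ^ (i+1)) • W
      rw [← Submodule.smul_assoc, pow_succ', Ideal.smul_eq_mul]
    rw [h2, hNi1] at h1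
    simpa using h1
  have hyW : y ∈ W := Submodule.smul_le_right hyN
  obtain ⟨b, hb⟩ := Submodule.mem_span_singleton.1 (hW ▸ hyW)
  -- finite socle test set
  obtain ⟨F, hFm, hFsoc⟩ := socle_finite_test m
  -- represent y with socle coefficients
  obtain ⟨κ, T, u, s, huF, hyrep⟩ :=
    exists_socle_rep F y (fun t ht => hmy t (hFm t ht))
  have husoc : ∀ j ∈ T, ∀ z ∈ m, z * u j = 0 := fun j hj => hFsoc (u j) (huF j hj)
  -- independent generators of the span of the u j
  set a₀ : Fin T.card → A := fun p => u (T.equivFin.symm p : κ) with ha₀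
  obtain ⟨r, av, havspan, havind⟩ :=
    exists_indep_gen T.card (Ideal.span (Set.range a₀)) a₀ rfl
  have ha₀soc : ∀ p, ∀ z ∈ m, z * a₀ p = 0 := by
    intro p z hz
    exact husoc _ (T.equivFin.symm p).2 z hz
  have havsoc : ∀ p, ∀ z ∈ m, z * av p = 0 := by
    have hsocideal : Ideal.span (Set.range a₀) ≤ Submodule.annihilator m := by
      rw [Ideal.span_le]
      rintro _ ⟨p, rfl⟩
      rw [SetLike.mem_coe, Submodule.mem_annihilator]
      intro z hz
      rw [smul_eq_mul, mul_comm]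
      exact ha₀soc p z hz
    intro p z hz
    have hmem : av p ∈ Submodule.annihilator m := by
      apply hsocideal
      rw [← havspan]
      exact Ideal.subset_span ⟨p, rfl⟩
    have h1 := Submodule.mem_annihilator.1 hmem z hz
    rw [smul_eq_mul] at h1
    rw [mul_comm]
    exact h1
  -- coefficients of u j in terms of av
  have hcoef : ∀ j : κ, ∃ cjs : Fin r → A, (j ∈ T → ∑ p, cjs p • av p = u j) := by
    intro j
    by_cases hj : j ∈ T
    · have hmem : u j ∈ Ideal.span (Set.range a₀) := by
        apply Ideal.subset_span
        exact ⟨T.equivFin ⟨j, hj⟩, by simp [ha₀]⟩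
      rw [← havspan] at hmem
      obtain ⟨cjs, hcjs⟩ := (Submodule.mem_span_range_iff_exists_fun A).1 hmem
      exact ⟨cjs, fun _ => hcjs⟩
    · exact ⟨0, fun h => absurd h hj⟩
  choose lam hlam using hcoef
  set c : Fin r → S := fun p => ∑ j ∈ T, lam j p • s j with hc
  have hyc : y = ∑ p, av p • c p := by
    rw [hyrep]
    have hterm : ∀ j ∈ T, u j • s j = ∑ p, av p • (lam j p • s j) := by
      intro j hj
      rw [← hlam j hj, Finset.sum_smul]
      apply Finset.sum_congr rfl
      intro p _
      rw [smul_eq_mul, mul_comm, mul_smul]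
    calc ∑ j ∈ T, u j • s j = ∑ j ∈ T, ∑ p, av p • (lam j p • s j) :=
          Finset.sum_congr rfl hterm
    _ = ∑ p, ∑ j ∈ T, av p • (lam j p • s j) := Finset.sum_comm
    _ = ∑ p, av p • c p := by
        apply Finset.sum_congr rfl
        intro p _
        rw [hc, Finset.smul_sum]
  -- the ideal downstairs
  set g : Fin r → (IsLocalRing.ResidueField A) ⊗[A] S := fun p => psi A S (c p) with hg
  set Jb : Ideal ((IsLocalRing.ResidueField A) ⊗[A] S) := Ideal.span (Set.range g) with hJb
  have hJbne : Jb ≠ ⊥ := by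
    intro hbot
    apply hy0
    rw [hyc]
    apply Finset.sum_eq_zero
    intro p _
    have hcI : c p ∈ I := by
      rw [← hkerψ, RingHom.mem_ker]
      have h1 : g p ∈ Jb := Ideal.subset_span ⟨p, rfl⟩
      rw [hbot] at h1
      exact Ideal.mem_bot.1 h1
    have hann : I ≤ (Submodule.span S {algebraMap A S (av p)}).annihilator := by
      rw [hI, Ideal.map_le_iff_le_comap]
      intro z hz
      rw [Ideal.mem_comap]
      rw [Submodule.mem_annihilator_span_singleton, smul_eq_mul, ← map_mul,
        havsoc p z hz, map_zero]
    have h4 := Submodule.mem_annihilator_span_singleton _ _ |>.1 (hann hcI)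
    rw [smul_eq_mul] at h4
    rw [Algebra.smul_def, mul_comm]
    exact h4
  have hp := hpure Jb hJbne
  have hsub : Submodule.annihilator J ≤ Ideal.comap (psi A S) (Submodule.annihilator Jb) := by
    intro t ht
    have htx : t * x = 0 := by
      have := Submodule.mem_annihilator.1 ht x hxJ
      rwa [smul_eq_mul] at this
    have hty : t * y = 0 := by
      rw [← hb, Algebra.smul_def, mul_left_comm, htx, mul_zero]
    have hrel : ∑ p, av p • (t * c p) = 0 := by
      have h5 : ∑ p, t * (av p • c p) = 0 := by rw [← Finset.mul_sum, ← hyc, hty]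
      rw [← h5]
      apply Finset.sum_congr rfl
      intro p _
      rw [Algebra.smul_def, Algebra.smul_def, mul_left_comm]
    obtain ⟨κ₂, bm, z, hrep, hrel2⟩ :=
      Module.Flat.isTrivialRelation_of_sum_smul_eq_zero (R := A) (M := S) hrel
    have hbm : ∀ p j, bm p j ∈ m := by
      intro p j
      refine havind (fun p' => bm p' j) ?_ p
      rw [← hrel2 j]
      apply Finset.sum_congr rfl
      intro p' _
      ring
    have hcpI : ∀ p, t * c p ∈ I := by
      intro p
      have h7 : t * c p = ∑ j, bm p j • z j := hrep p
      rw [h7]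
      apply Ideal.sum_mem
      intro j _
      rw [Algebra.smul_def]
      exact Ideal.mul_mem_right _ _ (Ideal.mem_map_of_mem _ (hbm p j))
    rw [Ideal.mem_comap]
    have hJb' : Jb = Submodule.span _ (Set.range g) := hJb
    rw [hJb']
    refine (Submodule.mem_annihilator_span _ _).2 ?_
    rintro ⟨_, p, rfl⟩
    show psi A S t • g p = 0
    rw [smul_eq_mul, hg, ← map_mul]
    have h6 : t * c p ∈ RingHom.ker (psi A S) := by rw [hkerψ]; exact hcpI p
    exact h6
  -- assemble dimensions
  set φ : S →+* ((IsLocalRing.ResidueField A) ⊗[A] S) ⧸ (Submodule.annihilator Jb) :=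
    (Ideal.Quotient.mk (Submodule.annihilator Jb)).comp (psi A S) with hφ
  have hφs : Function.Surjective φ := Ideal.Quotient.mk_surjective.comp hψs
  have e2 := RingHom.quotientKerEquivOfSurjective hφs
  have hkerφ : Submodule.annihilator J ≤ RingHom.ker φ := by
    intro t ht
    rw [RingHom.mem_ker, hφ, RingHom.comp_apply, Ideal.Quotient.eq_zero_iff_mem]
    exact hsub ht
  have d1 := ringKrullDim_eq_of_ringEquiv e2
  have hfactor : Function.Surjective (Ideal.Quotient.factor hkerφ) := by
    intro z
    obtain ⟨t, rfl⟩ := Ideal.Quotient.mk_surjective z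
    exact ⟨Ideal.Quotient.mk _ t, Ideal.Quotient.factor_mk hkerφ t⟩
  have d2 : ringKrullDim (S ⧸ RingHom.ker φ)
      ≤ ringKrullDim (S ⧸ Submodule.annihilator J) :=
    ringKrullDim_le_of_surjective _ hfactor
  have d3 := ringKrullDim_quotient_le (R := S) (Submodule.annihilator J)
  apply le_antisymm d3
  calc ringKrullDim S
      = ringKrullDim ((IsLocalRing.ResidueField A) ⊗[A] S) := hdimT.symm
    _ = ringKrullDim (((IsLocalRing.ResidueField A) ⊗[A] S) ⧸ (Submodule.annihilator Jb)) :=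
        hp.symm
    _ = ringKrullDim (S ⧸ RingHom.ker φ) := d1.symm
    _ ≤ ringKrullDim (S ⧸ Submodule.annihilator J) := d2
end

section
/- Let A' be a commutative ring and M ⊆ A' an ideal with M·M = 0, giving a square-zero extension 0 → M → A' → A → 0 with A = A'/M. Let R be a commutative A'-algebra. Then R is flat over A' if and only if: (i) the sequence obtained by tensoring 0 → M → A' → A → 0 with R over A' is exact, i.e., the natural map M ⊗_{A'} R → R is injective; and (ii) R ⊗_{A'} A is flat over A. -/
open TensorProduct LinearMap

set_option maxHeartbeats 1000000
set_option synthInstance.maxHeartbeats 400000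

open TensorProduct LinearMap

/-- Key: torsion modules tensored over A' behave like over A'/M, so injections are preserved. -/
theorem aux_rTensor_inj
    (A' : Type) [CommRing A'] (M : Ideal A')
    (R : Type) [CommRing R] [Algebra A' R]
    (h2 : Module.Flat (A' ⧸ M) ((A' ⧸ M) ⊗[A'] R))
    (N N' : Type) [AddCommGroup N] [AddCommGroup N'] [Module A' N] [Module A' N']
    (hN : Module.IsTorsionBySet A' N M) (hN' : Module.IsTorsionBySet A' N' M)
    (φ : N →ₗ[A'] N') (hφ : Function.Injective φ) :
    Function.Injective (LinearMap.rTensor R φ) := by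
  letI : Module (A' ⧸ M) N := hN.module
  letI : Module (A' ⧸ M) N' := hN'.module
  haveI : IsScalarTower A' (A' ⧸ M) N := hN.isScalarTower
  haveI : IsScalarTower A' (A' ⧸ M) N' := hN'.isScalarTower
  set Q := (A' ⧸ M) ⊗[A'] R with hQ
  let φA : N →ₗ[A' ⧸ M] N' :=
    { toFun := φ
      map_add' := φ.map_add
      map_smul' := by
        intro c x
        obtain ⟨a, rfl⟩ := Ideal.Quotient.mk_surjective c
        simp only [RingHom.id_apply]
        rw [hN.mk_smul, hN'.mk_smul]
        exact φ.map_smul a x }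
  have hφA : Function.Injective (LinearMap.rTensor Q φA) :=
    Module.Flat.rTensor_preserves_injective_linearMap (M := Q) φA hφ
  let e := AlgebraTensorModule.cancelBaseChange A' (A' ⧸ M) (A' ⧸ M) N R
  let e' := AlgebraTensorModule.cancelBaseChange A' (A' ⧸ M) (A' ⧸ M) N' R
  have key : ∀ w : N ⊗[A' ⧸ M] Q,
      LinearMap.rTensor R φ (e w) = e' (LinearMap.rTensor Q φA w) := by
    intro w
    induction w using TensorProduct.induction_on with
    | zero => simp
    | add x y hx hy => simp [map_add, hx, hy]
    | tmul n q =>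
      induction q using TensorProduct.induction_on with
      | zero => simp
      | add x y hx hy =>
        simp only [TensorProduct.tmul_add, map_add, hx, hy]
      | tmul a r =>
        show LinearMap.rTensor R φ ((a • n) ⊗ₜ[A'] r) = (a • φA n) ⊗ₜ[A'] r
        rw [rTensor_tmul, show φ (a • n) = a • φ n from φA.map_smul a n]; rfl
  have heq : ∀ z, LinearMap.rTensor R φ z = e' (LinearMap.rTensor Q φA (e.symm z)) := by
    intro z; rw [← key (e.symm z), e.apply_symm_apply]
  intro x y hxy
  rw [heq, heq] at hxy
  exact e.symm.injective (hφA (e'.injective hxy))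


/-- **Statement 10.** Let `A'` be a commutative ring and `M ⊆ A'` an ideal with `M·M = 0`,
giving a square-zero extension `0 → M → A' → A → 0` with `A = A'/M`.  Let `R` be a
commutative `A'`-algebra.  Then `R` is flat over `A'` if and only if (i) tensoring the
extension with `R` over `A'` remains exact, i.e. the natural map `M ⊗[A'] R → R` is
injective, and (ii) `R ⊗_{A'} A` is flat over `A`. -/
theorem stmt_10
    (A' : Type) [CommRing A'] (M : Ideal A') (hM : M * M = ⊥)
    (R : Type) [CommRing R] [Algebra A' R] :
    Module.Flat A' R ↔
      (Function.Injective
          (TensorProduct.lift ((LinearMap.lsmul A' R).comp M.subtype) :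
            M ⊗[A'] R →ₗ[A'] R) ∧
        Module.Flat (A' ⧸ M) ((A' ⧸ M) ⊗[A'] R)) := by
  constructor
  · intro hflat
    refine ⟨?_, inferInstance⟩
    rw [← lid_comp_rTensor]
    exact (TensorProduct.lid A' R).injective.comp
      (Module.Flat.iff_rTensor_injective'.mp hflat M)
  · rintro ⟨h1, h2⟩
    rw [Module.Flat.iff_rTensor_injective']
    intro I
    -- reduce to injectivity of the lift map
    suffices hlift : Function.Injective
        (TensorProduct.lift ((LinearMap.lsmul A' R).comp I.subtype) :
          I ⊗[A'] R →ₗ[A'] R) by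
      rw [← lid_comp_rTensor] at hlift
      intro x y hxy
      exact hlift (by simp [LinearMap.comp_apply, hxy])
    set K : Ideal A' := I ⊓ M with hK
    have hKI : K ≤ I := inf_le_left
    have hKM : K ≤ M := inf_le_right
    let ι1 : K →ₗ[A'] I := Submodule.inclusion hKI
    let ι2 : K →ₗ[A'] M := Submodule.inclusion hKM
    -- torsion structures
    have torM : Module.IsTorsionBySet A' M (M : Set A') := by
      intro x a
      ext
      have : (a : A') * (x : A') ∈ M * M := Ideal.mul_mem_mul a.2 x.2
      rw [hM] at this
      simpa [smul_eq_mul] using this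
    have torK : Module.IsTorsionBySet A' K (M : Set A') := by
      intro x a
      ext
      have : (a : A') * (x : A') ∈ M * M := Ideal.mul_mem_mul a.2 (hKM x.2)
      rw [hM] at this
      simpa [smul_eq_mul] using this
    have hg2 : Function.Injective (LinearMap.rTensor R ι2) :=
      aux_rTensor_inj A' M R h2 K M torK torM ι2 (Submodule.inclusion_injective hKM)
    -- the image ideal in A
    let p : I →ₗ[A'] (I.map (Ideal.Quotient.mk M)) :=
      { toFun := fun x => ⟨Ideal.Quotient.mk M x, Ideal.mem_map_of_mem _ x.2⟩
        map_add' := by intro x y; ext; simp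
        map_smul' := by
          intro a x
          ext
          simp only [Submodule.coe_smul_of_tower, SetLike.val_smul, smul_eq_mul, map_mul,
            RingHom.id_apply, Algebra.smul_def, Ideal.Quotient.algebraMap_eq] }
    have hp_surj : Function.Surjective p := by
      rintro ⟨y, hy⟩
      obtain ⟨x, hx, rfl⟩ :=
        (Ideal.mem_map_iff_of_surjective _ Ideal.Quotient.mk_surjective).mp hy
      exact ⟨⟨x, hx⟩, rfl⟩
    have hexact : Function.Exact ι1 p := by
      intro x
      constructor
      · intro hx
        have hx0 : Ideal.Quotient.mk M (x : A') = 0 := by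
          simpa [p] using congrArg Subtype.val hx
        exact ⟨⟨(x : A'), ⟨x.2, Ideal.Quotient.eq_zero_iff_mem.mp hx0⟩⟩, rfl⟩
      · rintro ⟨w, rfl⟩
        ext
        exact Ideal.Quotient.eq_zero_iff_mem.mpr (hKM w.2)
    have rT_exact : Function.Exact (LinearMap.rTensor R ι1) (LinearMap.rTensor R p) :=
      rTensor_exact R hexact hp_surj
    -- torsion structure on the quotient ring
    have torA : Module.IsTorsionBySet A' (A' ⧸ M) (M : Set A') := by
      intro x a
      obtain ⟨b, rfl⟩ := Ideal.Quotient.mk_surjective x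
      rw [Algebra.smul_def, Ideal.Quotient.algebraMap_eq, ← map_mul,
        Ideal.Quotient.eq_zero_iff_mem]
      exact M.mul_mem_right b a.2
    have torIbar : Module.IsTorsionBySet A' (I.map (Ideal.Quotient.mk M)) (M : Set A') := by
      intro x a
      ext
      have := torA (x := (x : A' ⧸ M)) (a := a)
      simpa using this
    let j : (I.map (Ideal.Quotient.mk M)) →ₗ[A'] (A' ⧸ M) :=
      LinearMap.restrictScalars A' (Submodule.subtype (I.map (Ideal.Quotient.mk M)))
    have hj : Function.Injective (LinearMap.rTensor R j) :=
      aux_rTensor_inj A' M R h2 _ _ torIbar torA j Subtype.coe_injective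
    -- first commutation
    have comm1 : ∀ z : I ⊗[A'] R,
        LinearMap.rTensor R j (LinearMap.rTensor R p z) =
          (1 : A' ⧸ M) ⊗ₜ[A'] (TensorProduct.lift ((LinearMap.lsmul A' R).comp I.subtype) z) := by
      intro z
      induction z using TensorProduct.induction_on with
      | zero => simp
      | add x y hx hy => simp [map_add, hx, hy, TensorProduct.tmul_add]
      | tmul x r =>
        simp only [LinearMap.rTensor_tmul, TensorProduct.lift.tmul, LinearMap.comp_apply,
          Submodule.coe_subtype, LinearMap.lsmul_apply]
        rw [← TensorProduct.smul_tmul, Algebra.smul_def, Ideal.Quotient.algebraMap_eq, mul_one]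
        rfl
    -- second commutation
    have comm2 : ∀ w : K ⊗[A'] R,
        TensorProduct.lift ((LinearMap.lsmul A' R).comp I.subtype)
            (LinearMap.rTensor R ι1 w) =
          TensorProduct.lift ((LinearMap.lsmul A' R).comp M.subtype)
            (LinearMap.rTensor R ι2 w) := by
      intro w
      induction w using TensorProduct.induction_on with
      | zero => simp
      | add x y hx hy => simp [map_add, hx, hy]
      | tmul k r => rfl
    -- the chase
    rw [injective_iff_map_eq_zero]
    intro z hz
    have h5 : LinearMap.rTensor R p z = 0 := by
      apply hj
      rw [map_zero, comm1 z, hz, TensorProduct.tmul_zero]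
    obtain ⟨w, rfl⟩ := (rT_exact _).mp h5
    have h6 : LinearMap.rTensor R ι2 w = 0 := by
      apply h1
      rw [← comm2 w, hz, map_zero]
    have h7 : w = 0 := hg2 (by rw [h6, map_zero])
    rw [h7, map_zero]
end

section
/- Let k be a field, P = k[x₁,…,xₙ, t] a polynomial ring regarded as an algebra over k[t], F ∈ P, and R = P/(F), regarded as a k[t]-algebra. Assume that the R-linear map R → R ⊗_P Ω_{P/k[t]} sending 1 to the image of the relative differential d_{P/k[t]}F is injective. Then there is an isomorphism of R-modules Ext¹_R(Ω_{R/k[t]}, R) ≅ P/(F, ∂F/∂x₁, …, ∂F/∂xₙ), where only the partial derivatives with respect to x₁, …, xₙ (not t) appear. -/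
open TensorProduct CategoryTheory MvPolynomial


section AuxExt

variable (R : Type) [CommRing R] (n : ℕ) (W : Type) [AddCommGroup W] [Module R W]

variable (dm : R →ₗ[R] (Fin n → R)) (pm : (Fin n → R) →ₗ[R] W)

/-- The objects of the projective resolution. -/
noncomputable def auxX : ℕ → ModuleCat R
  | 0 => ModuleCat.of R (Fin n → R)
  | 1 => ModuleCat.of R R
  | _ + 2 => ModuleCat.of R PUnit

/-- The differentials. -/
noncomputable def auxD : ∀ m : ℕ, auxX R n (m + 1) ⟶ auxX R n m
  | 0 => ModuleCat.ofHom dm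
  | _ + 1 => 0

/-- The resolution complex `… → 0 → R → Rⁿ`. -/
noncomputable def auxK : ChainComplex (ModuleCat R) ℕ :=
  ChainComplex.of (auxX R n) (auxD R n dm) (fun m => by
    show auxD R n dm (m + 1) ≫ auxD R n dm m = 0
    have : auxD R n dm (m + 1) = 0 := rfl
    rw [this, Limits.zero_comp])

lemma auxK_d10 : (auxK R n dm).d 1 0 = ModuleCat.ofHom dm := by
  exact ChainComplex.of_d (auxX R n) (auxD R n dm) 0

lemma auxK_d21 : (auxK R n dm).d 2 1 = 0 := by
  exact ChainComplex.of_d (auxX R n) (auxD R n dm) 1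

end AuxExt

section AuxExt2

variable (R : Type) [CommRing R] (n : ℕ) (W : Type) [AddCommGroup W] [Module R W]
variable (dm : R →ₗ[R] (Fin n → R)) (pm : (Fin n → R) →ₗ[R] W)
variable (hd : Function.Injective dm) (hex : Function.Exact dm pm) (hp : Function.Surjective pm)

noncomputable def auxRes : ProjectiveResolution (ModuleCat.of R W) where
  complex := auxK R n dm
  projective := fun m => by
    match m with
    | 0 => exact ModuleCat.projective_of_free (Pi.basisFun R (Fin n))
    | 1 => exact ModuleCat.projective_of_free (Module.Basis.singleton (Fin 1) R)
    | (m + 2) => exact ModuleCat.projective_of_free (Module.Basis.empty (ι := Fin 0) (R := R) PUnit)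
  π := (ChainComplex.toSingle₀Equiv _ _).symm ⟨ModuleCat.ofHom pm, by
    rw [auxK_d10]
    exact ModuleCat.hom_ext (LinearMap.ext fun x => hex.apply_apply_eq_zero x)⟩
  quasiIso := ⟨fun m => by
    cases m with
    | zero =>
      rw [ChainComplex.quasiIsoAt₀_iff, ShortComplex.quasiIso_iff_of_zeros']
      · have h0 : ModuleCat.ofHom dm ≫ ModuleCat.ofHom pm = 0 :=
          ModuleCat.hom_ext (LinearMap.ext fun x => hex.apply_apply_eq_zero x)
        refine (ShortComplex.exact_and_epi_g_iff_of_iso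
          (S₁ := ShortComplex.mk (ModuleCat.ofHom dm) (ModuleCat.ofHom pm) h0) ?_).1 ⟨?_, ?_⟩
        · refine ShortComplex.isoMk (Iso.refl _) (Iso.refl _) (Iso.refl _) ?_ ?_
          · dsimp
            simp [auxK_d10]
            rfl
          · dsimp
            simp [ChainComplex.toSingle₀Equiv_symm_apply_f_zero]
            rfl
        · rw [ShortComplex.moduleCat_exact_iff]
          intro x hx
          exact (hex x).1 hx
        · rw [ModuleCat.epi_iff_surjective]
          exact hp
      all_goals rfl
    | succ m =>
      rw [quasiIsoAt_iff_exactAt' _ _ (ChainComplex.exactAt_succ_single_obj _ _)]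
      rw [HomologicalComplex.exactAt_iff' _ (m + 2) (m + 1) m (by simp) (by simp)]
      match m with
      | 0 =>
        rw [ShortComplex.moduleCat_exact_iff]
        intro (x : R) hx
        refine ⟨0, ?_⟩
        have hx' : dm x = 0 := by
          have : (auxK R n dm).d 1 0 x = 0 := hx
          rwa [auxK_d10] at this
        have : x = 0 := hd (by simpa using hx')
        subst this
        simp
        rfl
      | (m + 1) =>
        refine ShortComplex.exact_of_isZero_X₂ _ ?_
        exact ModuleCat.isZero_of_subsingleton (ModuleCat.of R PUnit)⟩

end AuxExt2

section AuxExt3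

variable (R : Type) [CommRing R] (n : ℕ)
variable (dm : R →ₗ[R] (Fin n → R))

noncomputable def auxL : CochainComplex (ModuleCat R) ℕ :=
  (auxK R n dm).linearYonedaObj R (ModuleCat.of R R)

noncomputable def auxS : ShortComplex (ModuleCat R) := (auxL R n dm).sc' 0 1 2

lemma auxS_g_apply (φ : (auxS R n dm).X₂) : (auxS R n dm).g φ = 0 := by
  have h : (auxS R n dm).g φ =
      ((auxK R n dm).d 2 1 ≫ (show (auxK R n dm).X 1 ⟶ ModuleCat.of R R from φ)) := rfl
  rw [h, auxK_d21, Limits.zero_comp]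
  rfl

lemma ker_auxS_g : LinearMap.ker (auxS R n dm).g.hom = ⊤ :=
  Submodule.eq_top_iff'.mpr fun φ => LinearMap.mem_ker.mpr (auxS_g_apply R n dm φ)

noncomputable def auxEps : (LinearMap.ker (auxS R n dm).g.hom) ≃ₗ[R] R :=
  (LinearEquiv.ofTop _ (ker_auxS_g R n dm)).trans
    (show ((ModuleCat.of R R ⟶ ModuleCat.of R R) ≃ₗ[R] R) from (ModuleCat.homLinearEquiv (S := R)).trans (LinearMap.ringLmapEquivSelf R R R))

lemma auxEps_toCycles (φ : (Fin n → R) →ₗ[R] R) :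
    auxEps R n dm ((auxS R n dm).moduleCatToCycles (ModuleCat.ofHom φ)) = φ (dm 1) := by
  have h3 : ∀ c : R,
      (show ModuleCat.of R R ⟶ ModuleCat.of R R from
        ((auxS R n dm).f : (auxS R n dm).X₁ ⟶ (auxS R n dm).X₂) (ModuleCat.ofHom φ)).hom c
        = φ (dm c) := by
    intro c
    show φ ((auxK R n dm).d 1 0 c) = φ (dm c)
    rw [auxK_d10]
    rfl
  have h4 : auxEps R n dm ((auxS R n dm).moduleCatToCycles (ModuleCat.ofHom φ)) =
      (show ModuleCat.of R R ⟶ ModuleCat.of R R from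
        ((auxS R n dm).f : (auxS R n dm).X₁ ⟶ (auxS R n dm).X₂) (ModuleCat.ofHom φ)).hom 1 := rfl
  rw [h4, h3 1]

lemma auxApplyMemSpan (w : Fin n → R) (ψ : (Fin n → R) →ₗ[R] R) :
    ψ w ∈ Submodule.span R (Set.range w) := by
  have heq : ψ w = ∑ i, (w i) * ψ (Pi.single i 1) := by
    conv_lhs => rw [← Finset.univ_sum_single w]
    rw [map_sum]
    refine Finset.sum_congr rfl fun i _ => ?_
    have h5 : (Pi.single i (w i) : Fin n → R) = w i • (Pi.single i (1 : R) : Fin n → R) := by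
      funext j
      rcases eq_or_ne i j with rfl | hij
      · simp
      · simp [Pi.single_eq_of_ne (Ne.symm hij)]
    rw [h5, map_smul, smul_eq_mul]
  rw [heq]
  refine Submodule.sum_mem _ fun i _ => ?_
  rw [mul_comm]
  exact Submodule.smul_mem _ _ (Submodule.subset_span ⟨i, rfl⟩)

lemma auxMap_eq :
    Submodule.map (auxEps R n dm : LinearMap.ker (auxS R n dm).g.hom →ₗ[R] R)
        (LinearMap.range (auxS R n dm).moduleCatToCycles) =
      Submodule.span R (Set.range (dm 1)) := by
  apply le_antisymm
  · rintro x ⟨y, ⟨φ, rfl⟩, rfl⟩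
    simp only [LinearEquiv.coe_coe]
    show auxEps R n dm ((auxS R n dm).moduleCatToCycles (ModuleCat.ofHom φ.hom)) ∈ _
    rw [auxEps_toCycles R n dm φ.hom]
    exact auxApplyMemSpan R n (dm 1) φ.hom
  · intro x hx
    obtain ⟨c, rfl⟩ := (Submodule.mem_span_range_iff_exists_fun R).mp hx
    refine Submodule.mem_map.mpr
      ⟨(auxS R n dm).moduleCatToCycles
          (ModuleCat.ofHom (∑ i, c i • LinearMap.proj i : (Fin n → R) →ₗ[R] R)),
        LinearMap.mem_range.mpr ⟨_, rfl⟩, ?_⟩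
    simp only [LinearEquiv.coe_coe]
    rw [auxEps_toCycles]
    have hφ : ((∑ i, c i • LinearMap.proj i : (Fin n → R) →ₗ[R] R)) (dm 1)
        = ∑ i, c i • dm 1 i := by
      rw [LinearMap.sum_apply]
      refine Finset.sum_congr rfl fun i _ => ?_
      rw [LinearMap.smul_apply, LinearMap.proj_apply]
    exact hφ

noncomputable def auxQuotEquiv :
    (LinearMap.ker (auxS R n dm).g.hom ⧸ LinearMap.range (auxS R n dm).moduleCatToCycles) ≃ₗ[R]
      (R ⧸ Submodule.span R (Set.range (dm 1))) :=
  Submodule.Quotient.equiv _ _ (auxEps R n dm) (auxMap_eq R n dm)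

end AuxExt3

section AuxExt4

variable (R : Type) [CommRing R] (n : ℕ) (W : Type) [AddCommGroup W] [Module R W]
variable (dm : R →ₗ[R] (Fin n → R)) (pm : (Fin n → R) →ₗ[R] W)
variable (hd : Function.Injective dm) (hex : Function.Exact dm pm) (hp : Function.Surjective pm)

noncomputable def auxExtEquiv :
    (((Ext R (ModuleCat R) 1).obj (Opposite.op (ModuleCat.of R W))).obj (ModuleCat.of R R)) ≃ₗ[R]
      (R ⧸ Submodule.span R (Set.range (dm 1))) :=
  (((auxRes R n W dm pm hd hex hp).isoExt 1 (ModuleCat.of R R)) ≪≫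
    ((auxL R n dm).homologyIsoSc' 0 1 2 (by simp) (by simp)) ≪≫
    (auxS R n dm).moduleCatHomologyIso).toLinearEquiv.trans (auxQuotEquiv R n dm)

end AuxExt4


noncomputable section Alg

set_option maxHeartbeats 1000000
set_option synthInstance.maxHeartbeats 400000

open MvPolynomial KaehlerDifferential

namespace Stmt13

variable (k : Type) [Field k] (n : ℕ) (F : MvPolynomial (Fin n) (Polynomial k))

local notation "PP" => MvPolynomial (Fin n) (Polynomial k)

abbrev Q := MvPolynomial (Fin n) (Polynomial k) ⧸ Ideal.span {F}

instance instModQΩ : Module (Q k n F) Ω[Q k n F⁄Polynomial k] :=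
  instModuleKaehlerDifferentialOfSMulCommClass (Polynomial k) (Q k n F) (R' := Q k n F)

noncomputable def bQ : Module.Basis (Fin n) (Q k n F) (Q k n F ⊗[PP] Ω[PP⁄Polynomial k]) := by
  exact (KaehlerDifferential.mvPolynomialBasis (Polynomial k) (Fin n)).baseChange (Q k n F)

noncomputable def eQ : (Q k n F ⊗[PP] Ω[PP⁄Polynomial k]) ≃ₗ[Q k n F] (Fin n → Q k n F) :=
  (bQ k n F).equivFun

noncomputable def phiF : Q k n F →ₗ[Q k n F] (Q k n F ⊗[PP] Ω[PP⁄Polynomial k]) :=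
  LinearMap.toSpanSingleton _ _ ((1 : Q k n F) ⊗ₜ[PP] KaehlerDifferential.D (Polynomial k) PP F)

lemma smul_one_eq (a : PP) : a • (1 : Q k n F) = Ideal.Quotient.mk _ a := by
  have h : a • (1 : Q k n F) = Ideal.Quotient.mk (Ideal.span {F}) (a * 1) := rfl
  rw [h, mul_one]

lemma phiF_apply (c : Q k n F) :
    phiF k n F c = c ⊗ₜ[PP] KaehlerDifferential.D (Polynomial k) PP F := by
  have h : phiF k n F c = c • ((1 : Q k n F) ⊗ₜ[PP] KaehlerDifferential.D (Polynomial k) PP F) :=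
    rfl
  rw [h, TensorProduct.smul_tmul']
  congr 1
  exact mul_one c

noncomputable def dmapA : Q k n F →ₗ[Q k n F] (Fin n → Q k n F) :=
  (eQ k n F).toLinearMap ∘ₗ phiF k n F

noncomputable def pmapA : (Fin n → Q k n F) →ₗ[Q k n F] Ω[Q k n F⁄Polynomial k] := by
  exact (KaehlerDifferential.mapBaseChange (Polynomial k) PP (Q k n F)) ∘ₗ
    (eQ k n F).symm.toLinearMap

def vA : Fin n → Q k n F := fun i => Ideal.Quotient.mk _ (pderiv i F)

lemma dmapA_one : dmapA k n F 1 = vA k n F := by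
  funext i
  have h0 : dmapA k n F 1 = eQ k n F (phiF k n F 1) := rfl
  rw [h0, phiF_apply]
  show (bQ k n F).equivFun _ i = _
  rw [Module.Basis.equivFun_apply, bQ]
  rw [Module.Basis.baseChange_repr_tmul, KaehlerDifferential.mvPolynomialBasis_repr_apply,
    smul_one_eq]
  rfl

lemma mk_F_eq_zero : Ideal.Quotient.mk (Ideal.span {F}) F = 0 :=
  Ideal.Quotient.eq_zero_iff_mem.mpr (Ideal.mem_span_singleton_self F)

lemma surj_algebraMap : Function.Surjective (algebraMap PP (Q k n F)) := by
  rw [Ideal.Quotient.algebraMap_eq]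
  exact Ideal.Quotient.mk_surjective

lemma mem_ker_of (a : PP) : a * F ∈ RingHom.ker (algebraMap PP (Q k n F)) := by
  rw [RingHom.mem_ker, Ideal.Quotient.algebraMap_eq, map_mul, mk_F_eq_zero]
  exact mul_zero (Ideal.Quotient.mk (Ideal.span {F}) a)

lemma kerCT_eq (a : PP) :
    kerCotangentToTensor (Polynomial k) PP (Q k n F)
        (Ideal.toCotangent _ ⟨a * F, mem_ker_of k n F a⟩) =
      phiF k n F (Ideal.Quotient.mk _ a) := by
  rw [kerCotangentToTensor_toCotangent, phiF_apply]
  show (1 : Q k n F) ⊗ₜ[PP] (KaehlerDifferential.D (Polynomial k) PP) (a * F) = _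
  rw [Derivation.leibniz, TensorProduct.tmul_add, TensorProduct.tmul_smul,
    TensorProduct.tmul_smul]
  rw [TensorProduct.smul_tmul', TensorProduct.smul_tmul']
  rw [smul_one_eq, smul_one_eq, mk_F_eq_zero, TensorProduct.zero_tmul, add_zero]

lemma range_kerCT :
    Set.range (kerCotangentToTensor (Polynomial k) PP (Q k n F)) =
      Set.range (phiF k n F) := by
  ext z
  constructor
  · rintro ⟨w, rfl⟩
    obtain ⟨x, rfl⟩ := Ideal.toCotangent_surjective _ w
    have hx : (x : PP) ∈ Ideal.span {F} := by
      have h : algebraMap PP (Q k n F) x = 0 := x.2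
      refine Ideal.Quotient.eq_zero_iff_mem.mp ?_
      rw [← Ideal.Quotient.algebraMap_eq]
      exact h
    obtain ⟨a, ha⟩ := Ideal.mem_span_singleton'.mp hx
    have hx' : x = ⟨a * F, mem_ker_of k n F a⟩ := Subtype.ext ha.symm
    rw [hx', kerCT_eq]
    exact ⟨_, rfl⟩
  · rintro ⟨c, rfl⟩
    obtain ⟨a, rfl⟩ := Ideal.Quotient.mk_surjective c
    exact ⟨Ideal.toCotangent _ ⟨a * F, mem_ker_of k n F a⟩, kerCT_eq k n F a⟩

lemma exact_dp : Function.Exact (dmapA k n F) (pmapA k n F) := by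
  have hex0 := KaehlerDifferential.exact_kerCotangentToTensor_mapBaseChange
    (Polynomial k) PP (Q k n F) (surj_algebraMap k n F)
  intro y
  have h1 := hex0 ((eQ k n F).symm y)
  rw [range_kerCT] at h1
  have hpm : pmapA k n F y =
      KaehlerDifferential.mapBaseChange (Polynomial k) PP (Q k n F) ((eQ k n F).symm y) := rfl
  constructor
  · intro hy
    obtain ⟨c, hc⟩ := h1.mp (by rw [← hpm]; exact hy)
    refine ⟨c, ?_⟩
    have h2 : dmapA k n F c = eQ k n F (phiF k n F c) := rfl
    rw [h2, hc]
    exact (eQ k n F).apply_symm_apply y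
  · rintro ⟨c, rfl⟩
    rw [hpm]
    have h3 : (eQ k n F).symm (dmapA k n F c) = phiF k n F c := by
      have h2 : dmapA k n F c = eQ k n F (phiF k n F c) := rfl
      rw [h2, (eQ k n F).symm_apply_apply]
    rw [h3]
    exact (hex0 (phiF k n F c)).mpr (range_kerCT k n F ▸ ⟨c, rfl⟩)

lemma surj_pmapA : Function.Surjective (pmapA k n F) := by
  have h := KaehlerDifferential.mapBaseChange_surjective
    (Polynomial k) PP (Q k n F) (surj_algebraMap k n F)
  intro y
  obtain ⟨z, hz⟩ := h y
  exact ⟨eQ k n F z, by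
    have : pmapA k n F (eQ k n F z) =
        KaehlerDifferential.mapBaseChange (Polynomial k) PP (Q k n F)
          ((eQ k n F).symm (eQ k n F z)) := rfl
    rw [this, (eQ k n F).symm_apply_apply, hz]⟩

end Stmt13

end Alg


noncomputable section Main

set_option maxHeartbeats 1000000
set_option synthInstance.maxHeartbeats 1000000

open MvPolynomial

namespace Stmt13

variable (k : Type) [Field k] (n : ℕ) (F : MvPolynomial (Fin n) (Polynomial k))

local notation "PP" => MvPolynomial (Fin n) (Polynomial k)

lemma span_vA_eq : Submodule.span (Q k n F) (Set.range (vA k n F)) =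
    Ideal.map (Ideal.Quotient.mk (Ideal.span {F}))
      (Ideal.span ({F} ∪ Set.range fun i : Fin n => pderiv i F)) := by
  rw [Ideal.map_span, Set.image_union, Set.image_singleton, mk_F_eq_zero, ← Set.range_comp]
  have h : ((Ideal.Quotient.mk (Ideal.span {F})) ∘ fun i => pderiv i F) = vA k n F := rfl
  rw [h, Set.singleton_union, Ideal.submodule_span_eq]
  conv_rhs => rw [← Ideal.submodule_span_eq, Submodule.span_insert_zero, Ideal.submodule_span_eq]

end Stmt13

end Main


/-- The ideal `(F, ∂F/∂x₁, …, ∂F/∂xₙ)` generated by `F` and its partial derivatives with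
respect to the variables `x₁, …, xₙ` (not `t`), inside `P = (k[t])[x₁,…,xₙ]`. -/
noncomputable def jacobianIdealRel (k : Type) [Field k] (n : ℕ)
    (F : MvPolynomial (Fin n) (Polynomial k)) :
    Ideal (MvPolynomial (Fin n) (Polynomial k)) :=
  Ideal.span ({F} ∪ Set.range fun i : Fin n => pderiv i F)

set_option synthInstance.maxHeartbeats 1000000 in
set_option maxHeartbeats 1000000 in
/-- **Statement 13.** Let `k` be a field, `P = k[x₁,…,xₙ,t] = (k[t])[x₁,…,xₙ]` regarded as
an algebra over `k[t]`, `F ∈ P`, and `R = P/(F)`.  Assume that the `R`-linear map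
`R → R ⊗_P Ω_{P/k[t]}` sending `1` to the image of `d_{P/k[t]}F` is injective.  Then
`Ext¹_R(Ω_{R/k[t]}, R) ≅ P/(F, ∂F/∂x₁, …, ∂F/∂xₙ)` as `R`-modules (the `R`-module
structure on the target being the natural one, induced by multiplication in `P`), where
only the partial derivatives with respect to `x₁,…,xₙ` (not `t`) appear. -/
theorem stmt_13
    (k : Type) [Field k] (n : ℕ)
    (F : MvPolynomial (Fin n) (Polynomial k))
    (hinj : Function.Injective
      (fun c : (MvPolynomial (Fin n) (Polynomial k) ⧸ Ideal.span {F}) =>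
        (c ⊗ₜ[MvPolynomial (Fin n) (Polynomial k)]
            (KaehlerDifferential.D (Polynomial k) (MvPolynomial (Fin n) (Polynomial k)) F) :
          (MvPolynomial (Fin n) (Polynomial k) ⧸ Ideal.span {F})
            ⊗[MvPolynomial (Fin n) (Polynomial k)]
            (Ω[(MvPolynomial (Fin n) (Polynomial k))⁄(Polynomial k)]))))
    -- the natural `R = P/(F)`-module structure on `P/(F, ∂F/∂x₁, …, ∂F/∂xₙ)`,
    -- induced by multiplication in `P`
    [modQ : Module (MvPolynomial (Fin n) (Polynomial k) ⧸ Ideal.span {F})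
        (MvPolynomial (Fin n) (Polynomial k) ⧸ jacobianIdealRel k n F)]
    (hmodQ : ∀ p q : MvPolynomial (Fin n) (Polynomial k),
      (Ideal.Quotient.mk (Ideal.span {F}) p) •
          (Ideal.Quotient.mk (jacobianIdealRel k n F) q) =
        Ideal.Quotient.mk (jacobianIdealRel k n F) (p * q)) :
    Nonempty
      ((((@Ext (MvPolynomial (Fin n) (Polynomial k) ⧸ Ideal.span {F}) _
            (ModuleCat (MvPolynomial (Fin n) (Polynomial k) ⧸ Ideal.span {F})) _ _
            (ModuleCat.instLinear (S := MvPolynomial (Fin n) (Polynomial k) ⧸ Ideal.span {F})) _ 1).obj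
          (Opposite.op (@ModuleCat.of (MvPolynomial (Fin n) (Polynomial k) ⧸ Ideal.span {F}) _
            (Ω[(MvPolynomial (Fin n) (Polynomial k) ⧸ Ideal.span {F})⁄(Polynomial k)]) _
            (instModuleKaehlerDifferentialOfSMulCommClass (Polynomial k)
              (MvPolynomial (Fin n) (Polynomial k) ⧸ Ideal.span {F})
              (R' := MvPolynomial (Fin n) (Polynomial k) ⧸ Ideal.span {F}))))).obj
          (ModuleCat.of (MvPolynomial (Fin n) (Polynomial k) ⧸ Ideal.span {F})
            (MvPolynomial (Fin n) (Polynomial k) ⧸ Ideal.span {F})))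
        ≃ₗ[MvPolynomial (Fin n) (Polynomial k) ⧸ Ideal.span {F}]
      (MvPolynomial (Fin n) (Polynomial k) ⧸ jacobianIdealRel k n F)) := by
    classical
  -- injectivity of `dmapA`
  have hphi : Function.Injective (Stmt13.phiF k n F) := by
    intro a b hab
    apply hinj
    show a ⊗ₜ[MvPolynomial (Fin n) (Polynomial k)] _ = b ⊗ₜ[MvPolynomial (Fin n) (Polynomial k)] _
    rw [← Stmt13.phiF_apply k n F a, ← Stmt13.phiF_apply k n F b]
    exact hab
  have hd : Function.Injective (Stmt13.dmapA k n F) := by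
    intro a b hab
    exact hphi ((Stmt13.eQ k n F).injective hab)
  -- the Ext computation
  have e1 := auxExtEquiv (Stmt13.Q k n F) n (Ω[Stmt13.Q k n F⁄Polynomial k])
    (Stmt13.dmapA k n F) (Stmt13.pmapA k n F) hd (Stmt13.exact_dp k n F)
    (Stmt13.surj_pmapA k n F)
  rw [Stmt13.dmapA_one] at e1
  -- the map to `P ⧸ J`
  set ψ : Stmt13.Q k n F →ₗ[Stmt13.Q k n F]
      (MvPolynomial (Fin n) (Polynomial k) ⧸ jacobianIdealRel k n F) :=
    LinearMap.toSpanSingleton _ _ (Ideal.Quotient.mk (jacobianIdealRel k n F) 1) with hψdef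
  have hψ : ∀ p : MvPolynomial (Fin n) (Polynomial k),
      ψ (Ideal.Quotient.mk (Ideal.span {F}) p) = Ideal.Quotient.mk (jacobianIdealRel k n F) p := by
    intro p
    have h : ψ (Ideal.Quotient.mk (Ideal.span {F}) p) =
        (Ideal.Quotient.mk (Ideal.span {F}) p) • (Ideal.Quotient.mk (jacobianIdealRel k n F) 1) :=
      rfl
    rw [h, hmodQ, mul_one]
  have hsurj : Function.Surjective ψ := by
    intro x
    obtain ⟨q, rfl⟩ := Ideal.Quotient.mk_surjective x
    exact ⟨Ideal.Quotient.mk (Ideal.span {F}) q, hψ q⟩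
  have hmem : ∀ q : Stmt13.Q k n F,
      q ∈ Submodule.span (Stmt13.Q k n F) (Set.range (Stmt13.vA k n F)) ↔
      ∃ p ∈ jacobianIdealRel k n F, Ideal.Quotient.mk (Ideal.span {F}) p = q := by
    intro q
    rw [Stmt13.span_vA_eq]
    exact Ideal.mem_map_iff_of_surjective _ Ideal.Quotient.mk_surjective
  have hIJ : Ideal.span {F} ≤ jacobianIdealRel k n F :=
    Ideal.span_mono Set.subset_union_left
  have hker : LinearMap.ker ψ = Submodule.span (Stmt13.Q k n F) (Set.range (Stmt13.vA k n F)) := by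
    ext x
    obtain ⟨p, rfl⟩ := Ideal.Quotient.mk_surjective x
    rw [LinearMap.mem_ker, hψ, hmem]
    constructor
    · intro h0
      exact ⟨p, Ideal.Quotient.eq_zero_iff_mem.mp h0, rfl⟩
    · rintro ⟨q, hq, hq2⟩
      have hqp : q - p ∈ Ideal.span {F} := (Ideal.Quotient.mk_eq_mk_iff_sub_mem q p).mp hq2
      have hpq : p - q ∈ Ideal.span {F} := by
        have hneg := (Ideal.span {F}).neg_mem hqp
        rwa [neg_sub] at hneg
      have hp : p ∈ jacobianIdealRel k n F := by
        have : p = q + (p - q) := by ring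
        rw [this]
        exact Ideal.add_mem _ hq (hIJ hpq)
      exact Ideal.Quotient.eq_zero_iff_mem.mpr hp
  exact ⟨e1.trans ((Submodule.quotEquivOfEq _ _ hker.symm).trans
    (ψ.quotKerEquivOfSurjective hsurj))⟩
end

section
/- Let k be a field of characteristic zero, and let m ≥ 0, n ≥ 1, s ≥ 1 be integers. Let g ∈ k[y₁,…,yₙ, t] be a polynomial, viewed inside P = k[x₁,…,x_m, y₁,…,yₙ, t]. If s·t^{s−1}·g + t^s·(∂g/∂t) belongs to the ideal of P generated by x₁, …, x_m, t^s·(∂g/∂y₁), …, t^s·(∂g/∂yₙ), and t^s·g, then t divides g. -/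
open MvPolynomial

/-- **Statement 14.** Let `k` be a field of characteristic zero, `m ≥ 0`, `n ≥ 1`, `s ≥ 1`.
Let `g ∈ k[y₁,…,yₙ,t]`, viewed inside `P = k[x₁,…,x_m,y₁,…,yₙ,t]`.  If
`s·t^{s−1}·g + t^s·(∂g/∂t)` belongs to the ideal generated by the `xᵢ`, the
`t^s·(∂g/∂yⱼ)` and `t^s·g`, then `t` divides `g`. -/
theorem stmt_14
    (k : Type) [Field k] [CharZero k]
    (m n s : ℕ) (hn : 1 ≤ n) (hs : 1 ≤ s)
    (g₀ : MvPolynomial (Fin n ⊕ Unit) k)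
    (g : MvPolynomial (Fin m ⊕ (Fin n ⊕ Unit)) k)
    (hg : g = rename Sum.inr g₀)
    (t : MvPolynomial (Fin m ⊕ (Fin n ⊕ Unit)) k)
    (ht : t = X (Sum.inr (Sum.inr ())))
    (hmem :
      (s : MvPolynomial (Fin m ⊕ (Fin n ⊕ Unit)) k) * t ^ (s - 1) * g
          + t ^ s * pderiv (Sum.inr (Sum.inr ())) g ∈
        Ideal.span
          ((Set.range fun i : Fin m => X (Sum.inl i)) ∪
            (Set.range fun j : Fin n =>
              t ^ s * pderiv (Sum.inr (Sum.inl j)) g) ∪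
            {t ^ s * g})) :
    t ∣ g := by
  subst hg ht
  set T : MvPolynomial (Fin n ⊕ Unit) k := X (Sum.inr ()) with hT
  set φ : MvPolynomial (Fin m ⊕ (Fin n ⊕ Unit)) k →ₐ[k] MvPolynomial (Fin n ⊕ Unit) k :=
    aeval (Sum.elim (fun _ => 0) X) with hφ
  have hφr : ∀ p : MvPolynomial (Fin n ⊕ Unit) k, φ (rename Sum.inr p) = p := by
    intro p
    rw [hφ, aeval_rename]
    simp only [Sum.elim_comp_inr]
    exact aeval_X_left_apply p
  have hφX : φ (X (Sum.inr (Sum.inr ()))) = T := by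
    have : (X (Sum.inr (Sum.inr ())) : MvPolynomial (Fin m ⊕ (Fin n ⊕ Unit)) k)
        = rename Sum.inr (X (Sum.inr ())) := by simp
    rw [this, hφr]
  have hpd : ∀ v : Fin n ⊕ Unit,
      pderiv (Sum.inr v) (rename (Sum.inr : (Fin n ⊕ Unit) → Fin m ⊕ (Fin n ⊕ Unit)) g₀)
        = rename Sum.inr (pderiv v g₀) :=
    fun v => pderiv_rename Sum.inr_injective v g₀
  -- image of the element of hmem under φ
  have himg := Ideal.mem_map_of_mem (φ : MvPolynomial (Fin m ⊕ (Fin n ⊕ Unit)) k →+*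
      MvPolynomial (Fin n ⊕ Unit) k) hmem
  rw [Ideal.map_span] at himg
  have hle : Ideal.span ((φ : MvPolynomial (Fin m ⊕ (Fin n ⊕ Unit)) k →+*
      MvPolynomial (Fin n ⊕ Unit) k) ''
        ((Set.range fun i : Fin m => X (Sum.inl i)) ∪
          (Set.range fun j : Fin n =>
            X (Sum.inr (Sum.inr ())) ^ s * pderiv (Sum.inr (Sum.inl j)) (rename Sum.inr g₀)) ∪
          {X (Sum.inr (Sum.inr ())) ^ s * rename Sum.inr g₀})) ≤
      Ideal.span {T ^ s} := by
    rw [Ideal.span_le]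
    rintro y ⟨x, hx, rfl⟩
    rw [SetLike.mem_coe, Ideal.mem_span_singleton]
    rcases hx with (⟨i, rfl⟩ | ⟨j, rfl⟩) | rfl
    · have : φ (X (Sum.inl i)) = 0 := by simp [hφ]
      simp only [AlgHom.coe_toRingHom, this]
      exact dvd_zero _
    · simp only [AlgHom.coe_toRingHom, map_mul, map_pow, hφX, hpd, hφr]
      exact Dvd.intro _ rfl
    · simp only [AlgHom.coe_toRingHom, map_mul, map_pow, hφX, hφr]
      exact Dvd.intro _ rfl
  have hdvd : T ^ s ∣ (s : MvPolynomial (Fin n ⊕ Unit) k) * T ^ (s - 1) * g₀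
      + T ^ s * pderiv (Sum.inr ()) g₀ := by
    have := hle himg
    rw [Ideal.mem_span_singleton] at this
    convert this using 1
    simp only [AlgHom.coe_toRingHom, map_add, map_mul, map_pow, hφX, hpd, hφr, map_natCast]
  have hdvd2 : T ^ s ∣ (s : MvPolynomial (Fin n ⊕ Unit) k) * T ^ (s - 1) * g₀ :=
    (dvd_add_left (Dvd.intro _ rfl)).mp hdvd
  -- cancel T^(s-1)
  have hTne : T ^ (s - 1) ≠ 0 := pow_ne_zero _ (X_ne_zero _)
  have hcancel : T ∣ (s : MvPolynomial (Fin n ⊕ Unit) k) * g₀ := by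
    have hpow : T ^ s = T ^ (s - 1) * T := by
      conv_lhs => rw [← Nat.sub_add_cancel hs, pow_succ]
    rw [hpow] at hdvd2
    have : T ^ (s - 1) * T ∣ T ^ (s - 1) * ((s : MvPolynomial (Fin n ⊕ Unit) k) * g₀) := by
      convert hdvd2 using 1; ring
    exact (mul_dvd_mul_iff_left hTne).mp this
  have hsunit : IsUnit ((s : MvPolynomial (Fin n ⊕ Unit) k)) := by
    have hsk : ((s : k)) ≠ 0 := Nat.cast_ne_zero.mpr (by omega)
    have hC : (s : MvPolynomial (Fin n ⊕ Unit) k) = C (s : k) := by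
      simp
    rw [hC]
    exact IsUnit.map C (isUnit_iff_ne_zero.mpr hsk)
  have hTg : T ∣ g₀ := (hsunit.dvd_mul_left).mp hcancel
  have hfin : rename (Sum.inr : (Fin n ⊕ Unit) → Fin m ⊕ (Fin n ⊕ Unit)) T ∣
      rename (Sum.inr : (Fin n ⊕ Unit) → Fin m ⊕ (Fin n ⊕ Unit)) g₀ :=
    map_dvd (rename Sum.inr) hTg
  have hXeq : rename (Sum.inr : (Fin n ⊕ Unit) → Fin m ⊕ (Fin n ⊕ Unit)) T
      = X (Sum.inr (Sum.inr ())) := by rw [hT, rename_X]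
  rwa [hXeq] at hfin
end
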